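/- arXiv:1012.4721 — 5 statements merged into one kernel-verified Lean document; each statement's English description precedes it below -/
import Mathlib

section
/- For every polynomial f in two complex variables and every t ∈ [0,1], ∫_{|z|≤1} f(z̄(1−z̄z)^{(1−t)/2}, z(1−z̄z)^{(1+t)/2}) dz dz̄ = ∫_{|z|≤1} f(z̄, z(1−z̄z)) dz dz̄; in particular the Holstein-Primakoff-type integral (t=0) over the unit disc equals the Dyson-Maleev-type integral (t=1). -/
/-!
Rotating the disc by a unit complex number `c` multiplies `z̄ ^ a * z ^ b * g (|z|²)` by
`c̄ ^ a * c ^ b`, which is `-1` for a suitable `c` when `a ≠ b`. Hence only the diagonal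
monomials `(z̄ u₁) ^ a * (z u₂) ^ a = (|z|² u₁ u₂) ^ a` contribute, and they see the radial
factors only through their product, which is `1 - |z|²` for every `t`.
-/

open MeasureTheory Complex ComplexConjugate

theorem setIntegral_closedBall_comp_circle_mul (c : Circle) (r : ℝ) (F : ℂ → ℂ) :
    ∫ z in Metric.closedBall (0 : ℂ) r, F (c * z) = ∫ z in Metric.closedBall (0 : ℂ) r, F z := by
  have h := (rotation c).measurePreserving.setIntegral_preimage_emb
    (rotation c).toHomeomorph.measurableEmbedding F (Metric.closedBall 0 r)
  simpa [map_zero] using h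

theorem Circle.exists_conj_pow_mul_pow_eq_neg_one {a b : ℕ} (hab : a ≠ b) :
    ∃ c : Circle, conj (c : ℂ) ^ a * (c : ℂ) ^ b = -1 := by
  have hba : (b : ℂ) - a ≠ 0 := sub_ne_zero.mpr (by exact_mod_cast hab.symm)
  refine ⟨Circle.exp (Real.pi / (b - a)), ?_⟩
  rw [Circle.coe_exp, ← exp_conj, ← exp_nat_mul, ← exp_nat_mul, ← Complex.exp_add]
  convert exp_pi_mul_I using 2
  simp only [map_mul, conj_ofReal, conj_I]
  push_cast
  field_simp
  ring

theorem setIntegral_closedBall_conj_pow_mul_pow_mul_eq_zero {a b : ℕ} (hab : a ≠ b)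
    (r : ℝ) (g : ℝ → ℂ) :
    ∫ z in Metric.closedBall (0 : ℂ) r, conj z ^ a * z ^ b * g (normSq z) = 0 := by
  obtain ⟨c, hc⟩ := Circle.exists_conj_pow_mul_pow_eq_neg_one hab
  have hrot (z : ℂ) : conj (c * z) ^ a * (c * z) ^ b * g (normSq (c * z)) =
      -(conj z ^ a * z ^ b * g (normSq z)) := by
    rw [normSq_mul, Circle.normSq_coe, one_mul, map_mul, mul_pow, mul_pow,
      ← neg_one_mul, ← hc]
    ring
  have h := setIntegral_closedBall_comp_circle_mul c r
    fun z => conj z ^ a * z ^ b * g (normSq z)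
  simp only [hrot, integral_neg] at h
  exact self_eq_neg.mp h.symm

section RadialFactors

variable {r : ℝ} {u₁ u₂ w₁ w₂ : ℝ → ℂ}

theorem setIntegral_closedBall_monomial_eq_of_mul_eq
    (huw : ∀ s ∈ Set.Icc 0 (r ^ 2), u₁ s * u₂ s = w₁ s * w₂ s) (a b : ℕ) :
    ∫ z in Metric.closedBall (0 : ℂ) r, (conj z * u₁ (normSq z)) ^ a * (z * u₂ (normSq z)) ^ b =
      ∫ z in Metric.closedBall (0 : ℂ) r,
        (conj z * w₁ (normSq z)) ^ a * (z * w₂ (normSq z)) ^ b := by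
  rcases eq_or_ne a b with rfl | hab
  · refine setIntegral_congr_fun measurableSet_closedBall fun z hz => ?_
    have hs : normSq z ∈ Set.Icc 0 (r ^ 2) := by
      refine ⟨normSq_nonneg z, ?_⟩
      rw [← Complex.sq_norm]
      exact pow_le_pow_left₀ (norm_nonneg z) (mem_closedBall_zero_iff.mp hz) 2
    simp only [← mul_pow, mul_mul_mul_comm, huw _ hs]
  · simp only [mul_pow, mul_mul_mul_comm _ (u₁ _ ^ a), mul_mul_mul_comm _ (w₁ _ ^ a)]
    rw [setIntegral_closedBall_conj_pow_mul_pow_mul_eq_zero hab r fun s => u₁ s ^ a * u₂ s ^ b,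
      setIntegral_closedBall_conj_pow_mul_pow_mul_eq_zero hab r fun s => w₁ s ^ a * w₂ s ^ b]

theorem integrableOn_closedBall_monomial (hu₁ : Continuous u₁) (hu₂ : Continuous u₂) (a b : ℕ) :
    IntegrableOn (fun z : ℂ => (conj z * u₁ (normSq z)) ^ a * (z * u₂ (normSq z)) ^ b)
      (Metric.closedBall 0 r) := by
  refine ContinuousOn.integrableOn_compact (isCompact_closedBall 0 r) (Continuous.continuousOn ?_)
  fun_prop

theorem setIntegral_closedBall_eval_eq_of_mul_eq (f : MvPolynomial (Fin 2) ℂ)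
    (hu₁ : Continuous u₁) (hu₂ : Continuous u₂) (hw₁ : Continuous w₁) (hw₂ : Continuous w₂)
    (huw : ∀ s ∈ Set.Icc 0 (r ^ 2), u₁ s * u₂ s = w₁ s * w₂ s) :
    ∫ z in Metric.closedBall (0 : ℂ) r,
        MvPolynomial.eval ![conj z * u₁ (normSq z), z * u₂ (normSq z)] f =
      ∫ z in Metric.closedBall (0 : ℂ) r,
        MvPolynomial.eval ![conj z * w₁ (normSq z), z * w₂ (normSq z)] f := by
  simp only [MvPolynomial.eval_eq', Fin.prod_univ_two, Matrix.cons_val_zero,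
    Matrix.cons_val_one]
  rw [integral_finsetSum _ fun d _ => (integrableOn_closedBall_monomial hu₁ hu₂ _ _).const_mul _,
    integral_finsetSum _ fun d _ => (integrableOn_closedBall_monomial hw₁ hw₂ _ _).const_mul _]
  refine Finset.sum_congr rfl fun d _ => ?_
  rw [integral_const_mul, integral_const_mul,
    setIntegral_closedBall_monomial_eq_of_mul_eq huw]

end RadialFactors

/-- Scalar compact case of Theorem 2.1 (type AIII, p = q = 1): for every
polynomial `f` in two complex variables and every `t ∈ [0,1]`,
`∫_{|z|≤1} f(z̄(1-z̄z)^{(1-t)/2}, z(1-z̄z)^{(1+t)/2}) dz dz̄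
  = ∫_{|z|≤1} f(z̄, z(1-z̄z)) dz dz̄`;
in particular the Holstein-Primakoff integral (`t = 0`) equals the
Dyson-Maleev integral (`t = 1`). -/
theorem scalar_compact_dyson_maleev (f : MvPolynomial (Fin 2) ℂ)
    (t : ℝ) (ht : t ∈ Set.Icc (0 : ℝ) 1) :
    (∫ z in {z : ℂ | ‖z‖ ≤ 1},
        MvPolynomial.eval
          ![(starRingEnd ℂ) z * (((1 - normSq z) ^ ((1 - t) / 2) : ℝ) : ℂ),
            z * (((1 - normSq z) ^ ((1 + t) / 2) : ℝ) : ℂ)] f) =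
      ∫ z in {z : ℂ | ‖z‖ ≤ 1},
        MvPolynomial.eval
          ![(starRingEnd ℂ) z, z * (1 - (normSq z : ℂ))] f := by
  obtain ⟨ht₀, ht₁⟩ := ht
  have hp : 0 ≤ (1 - t) / 2 := by linarith
  have hq : 0 ≤ (1 + t) / 2 := by linarith
  have h := setIntegral_closedBall_eval_eq_of_mul_eq (r := 1) f
    (u₁ := fun s => ((1 - s) ^ ((1 - t) / 2) : ℝ)) (u₂ := fun s => ((1 - s) ^ ((1 + t) / 2) : ℝ))
    (w₁ := fun _ => 1) (w₂ := fun s => 1 - s)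
    (by fun_prop (disch := exact hp)) (by fun_prop (disch := exact hq)) (by fun_prop) (by fun_prop)
    fun s hs => by
      rw [← ofReal_mul, ← Real.rpow_add_of_nonneg (sub_nonneg.mpr (by simpa using hs.2)) hp hq,
        show (1 - t) / 2 + (1 + t) / 2 = 1 by ring, Real.rpow_one]
      push_cast; ring
  have hdisc : {z : ℂ | ‖z‖ ≤ 1} = Metric.closedBall 0 1 :=
    Set.ext fun _ => mem_closedBall_zero_iff.symm
  simpa [hdisc] using h
end

section
/- Let s = Diag(1_p, −1_q) and let g ∈ SL(p+q, ℂ) have block form g = [[A, B],[C, D]] with A and D invertible. Set Z = B D^{−1} and Z̃ = C A^{−1}. Then g s g^{−1} = [[(1+Z Z̃)(1−Z Z̃)^{−1}, −2Z(1−Z̃Z)^{−1}], [2Z̃(1−Z Z̃)^{−1}, −(1+Z̃Z)(1−Z̃Z)^{−1}]], provided 1 − Z Z̃ and 1 − Z̃ Z are invertible. -/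
/-!
Since `A` and `D` are invertible, `g = [[1, Z], [Z̃, 1]] · Diag(A, D)`, and the block-diagonal factor
commutes with `s`, so `g s g⁻¹ = K s K⁻¹` for `K = [[1, Z], [Z̃, 1]]`. The inverse of `K` is
`[[(1 - Z Z̃)⁻¹, -Z (1 - Z̃ Z)⁻¹], [-Z̃ (1 - Z Z̃)⁻¹, (1 - Z̃ Z)⁻¹]]`, and multiplying out gives the formula.
-/

open Matrix

namespace Matrix

variable {m n R : Type*} [Fintype m] [Fintype n] [DecidableEq m] [DecidableEq n] [CommRing R]

theorem inv_fromBlocks_one_one (Z : Matrix m n R) (Z' : Matrix n m R)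
    (h₁ : IsUnit (1 - Z * Z')) (h₂ : IsUnit (1 - Z' * Z)) :
    (fromBlocks 1 Z Z' 1)⁻¹ =
      fromBlocks (1 - Z * Z')⁻¹ (-(Z * (1 - Z' * Z)⁻¹)) (-(Z' * (1 - Z * Z')⁻¹))
        (1 - Z' * Z)⁻¹ := by
  apply inv_eq_right_inv
  rw [fromBlocks_multiply, ← fromBlocks_one]
  congr 1
  · convert mul_nonsing_inv _ ((isUnit_iff_isUnit_det _).mp h₁) using 1
    rw [Matrix.sub_mul, Matrix.mul_neg, ← Matrix.mul_assoc, ← sub_eq_add_neg]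
  · simp
  · simp
  · convert mul_nonsing_inv _ ((isUnit_iff_isUnit_det _).mp h₂) using 1
    rw [Matrix.sub_mul, Matrix.mul_neg, ← Matrix.mul_assoc, neg_add_eq_sub, Matrix.one_mul]

omit [DecidableEq m] [DecidableEq n] in
theorem commute_fromBlocks_zero_zero {A A' : Matrix m m R} {D D' : Matrix n n R}
    (hA : Commute A A') (hD : Commute D D') :
    Commute (fromBlocks A 0 0 D) (fromBlocks A' 0 0 D') := by
  simp only [Commute, SemiconjBy, fromBlocks_multiply, hA.eq, hD.eq, Matrix.mul_zero,
    Matrix.zero_mul, add_zero]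

theorem fromBlocks_eq_fromBlocks_one_one_mul (A : Matrix m m R) (B : Matrix m n R)
    (C : Matrix n m R) (D : Matrix n n R) (hA : IsUnit A) (hD : IsUnit D) :
    fromBlocks A B C D = fromBlocks 1 (B * D⁻¹) (C * A⁻¹) 1 * fromBlocks A 0 0 D := by
  simp [fromBlocks_multiply, nonsing_inv_mul_cancel_right _ _ ((isUnit_iff_isUnit_det _).mp hA),
    nonsing_inv_mul_cancel_right _ _ ((isUnit_iff_isUnit_det _).mp hD)]

theorem mul_mul_mul_inv_of_commute (K H S : Matrix n n R) (hH : IsUnit H) (hHS : Commute H S) :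
    K * H * S * (K * H)⁻¹ = K * S * K⁻¹ := by
  rw [mul_inv_rev, Matrix.mul_assoc K H S, hHS.eq, ← Matrix.mul_assoc K S H, ← Matrix.mul_assoc,
    mul_nonsing_inv_cancel_right _ _ ((isUnit_iff_isUnit_det _).mp hH)]

end Matrix

theorem gsg_inv_block_formula_general {p q : ℕ}
    (A : Matrix (Fin p) (Fin p) ℂ) (B : Matrix (Fin p) (Fin q) ℂ)
    (C : Matrix (Fin q) (Fin p) ℂ) (D : Matrix (Fin q) (Fin q) ℂ)
    (hA : IsUnit A) (hD : IsUnit D)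
    (Z : Matrix (Fin p) (Fin q) ℂ) (Zt : Matrix (Fin q) (Fin p) ℂ)
    (hZ : Z = B * D⁻¹) (hZt : Zt = C * A⁻¹)
    (h1 : IsUnit (1 - Z * Zt)) (h2 : IsUnit (1 - Zt * Z)) :
    fromBlocks A B C D * fromBlocks (1 : Matrix (Fin p) (Fin p) ℂ) 0 0
        (-1 : Matrix (Fin q) (Fin q) ℂ) * (fromBlocks A B C D)⁻¹ =
      fromBlocks ((1 + Z * Zt) * (1 - Z * Zt)⁻¹) (-(2 : ℂ) • (Z * (1 - Zt * Z)⁻¹))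
        ((2 : ℂ) • (Zt * (1 - Z * Zt)⁻¹)) (-((1 + Zt * Z) * (1 - Zt * Z)⁻¹)) := by
  have hcomm : Commute (fromBlocks A 0 0 D) (fromBlocks 1 0 0 (-1)) :=
    commute_fromBlocks_zero_zero (.one_right A) (.neg_one_right D)
  rw [fromBlocks_eq_fromBlocks_one_one_mul A B C D hA hD, ← hZ, ← hZt,
    mul_mul_mul_inv_of_commute _ _ _ (isUnit_fromBlocks_zero₂₁.mpr ⟨hA, hD⟩) hcomm,
    inv_fromBlocks_one_one Z Zt h1 h2, fromBlocks_multiply, fromBlocks_multiply]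
  congr 1 <;>
    simp only [Matrix.mul_one, Matrix.one_mul, Matrix.mul_zero, Matrix.mul_neg, Matrix.neg_mul,
      Matrix.add_mul, add_zero, zero_add, neg_smul, two_smul, neg_neg, Matrix.mul_assoc] <;>
    abel

/-- For `g ∈ SL(p+q, ℂ)` in block form `g = [[A, B], [C, D]]` with `A`, `D`
invertible, setting `Z = B D⁻¹`, `Z̃ = C A⁻¹` and `s = Diag(1_p, -1_q)`, one has
`g s g⁻¹ = [[(1+Z Z̃)(1-Z Z̃)⁻¹, -2Z(1-Z̃Z)⁻¹], [2Z̃(1-Z Z̃)⁻¹, -(1+Z̃Z)(1-Z̃Z)⁻¹]]`,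
provided `1 - Z Z̃` and `1 - Z̃ Z` are invertible. -/
theorem gsg_inv_block_formula {p q : ℕ}
    (A : Matrix (Fin p) (Fin p) ℂ) (B : Matrix (Fin p) (Fin q) ℂ)
    (C : Matrix (Fin q) (Fin p) ℂ) (D : Matrix (Fin q) (Fin q) ℂ)
    (hA : IsUnit A) (hD : IsUnit D)
    (hg : (fromBlocks A B C D).det = 1)
    (Z : Matrix (Fin p) (Fin q) ℂ) (Zt : Matrix (Fin q) (Fin p) ℂ)
    (hZ : Z = B * D⁻¹) (hZt : Zt = C * A⁻¹)
    (h1 : IsUnit (1 - Z * Zt)) (h2 : IsUnit (1 - Zt * Z)) :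
    fromBlocks A B C D * fromBlocks (1 : Matrix (Fin p) (Fin p) ℂ) 0 0
        (-1 : Matrix (Fin q) (Fin q) ℂ) * (fromBlocks A B C D)⁻¹ =
      fromBlocks ((1 + Z * Zt) * (1 - Z * Zt)⁻¹) (-(2 : ℂ) • (Z * (1 - Zt * Z)⁻¹))
        ((2 : ℂ) • (Zt * (1 - Z * Zt)⁻¹)) (-((1 + Zt * Z) * (1 - Zt * Z)⁻¹)) :=
  gsg_inv_block_formula_general A B C D hA hD Z Zt hZ hZt h1 h2
end

section
/- Let b be a p×q complex matrix and b̃ a q×p complex matrix, and suppose 1 + b̃b (equivalently 1 + b b̃) has no eigenvalues on the nonpositive real axis so that its holomorphic square root is defined. Set Z = −b(1+b̃b)^{−1/2} and Z̃ = −b̃(1+b b̃)^{−1/2}. Then (1+Z Z̃)(1−Z Z̃)^{−1} = 1 + 2b b̃, −2Z(1−Z̃Z)^{−1} = 2b(1+b̃b)^{1/2}, 2Z̃(1−Z Z̃)^{−1} = −2b̃(1+b b̃)^{1/2}, and −(1+Z̃Z)(1−Z̃Z)^{−1} = −1 − 2b̃b. -/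
open Matrix Polynomial

/-!
Since `b (1 + b̃b) = (1 + b b̃) b`, the matrix `D = b s₁ - s₂ b` solves the Sylvester equation
`s₂ D = D (-s₁)`. The spectra of `s₂` and `-s₁` lie in opposite open half-planes, so `D = 0`:
if `χ` is the characteristic polynomial of `s₂`, then `0 = χ(s₂) D = D χ(-s₁)`, and `χ(-s₁)` is
invertible by the spectral mapping theorem. Hence `Z = -s₂⁻¹ b`, so
`Z Z̃ = s₂⁻¹ b b̃ s₂⁻¹ = 1 - s₂⁻²` and `(1 - Z Z̃)⁻¹ = s₂² = 1 + b b̃`; symmetrically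
`(1 - Z̃ Z)⁻¹ = 1 + b̃b`, and the four identities follow by expanding.
-/

theorem one_add_mul_eq_of_one_sub_mul_eq_one {R : Type*} [Ring R] {w m : R}
    (h : (1 - w) * m = 1) : (1 + w) * m = m + m - 1 :=
  calc (1 + w) * m = m + m - (1 - w) * m := by noncomm_ring
    _ = m + m - 1 := by rw [h]

theorem isUnit_of_forall_spectrum_re_pos {A : Type*} [Ring A] [Algebra ℂ A] {a : A}
    (h : ∀ x ∈ spectrum ℂ a, 0 < x.re) : IsUnit a :=
  (spectrum.zero_notMem_iff ℂ).mp fun h0 => (h 0 h0).false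

namespace Matrix

variable {m n : Type*} [Fintype m] [DecidableEq m] [Fintype n] [DecidableEq n]

theorem aeval_mul_eq_mul_aeval {R : Type*} [CommRing R] {A : Matrix m m R} {B : Matrix n n R}
    {X : Matrix m n R} (h : A * X = X * B) (p : R[X]) : aeval A p * X = X * aeval B p := by
  have hpow (k : ℕ) : A ^ k * X = X * B ^ k := by
    induction k with
    | zero => simp
    | succ k ih => rw [pow_succ, Matrix.mul_assoc, h, ← Matrix.mul_assoc, ih, pow_succ,
        Matrix.mul_assoc]
  induction p using Polynomial.induction_on' with
  | add f g hf hg => simp only [map_add, Matrix.add_mul, Matrix.mul_add, hf, hg]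
  | monomial k a => simp only [aeval_monomial, ← Algebra.smul_def, Matrix.smul_mul,
      Matrix.mul_smul, hpow]

theorem eq_zero_of_mul_eq_mul_of_disjoint_spectrum {K : Type*} [Field K] [IsAlgClosed K]
    {A : Matrix m m K} {B : Matrix n n K} {X : Matrix m n K} (h : A * X = X * B)
    (hAB : Disjoint (spectrum K A) (spectrum K B)) : X = 0 := by
  cases isEmpty_or_nonempty m
  · exact Subsingleton.elim _ _
  have hdeg : 0 < A.charpoly.degree := by
    rw [charpoly_degree_eq_dim]
    exact_mod_cast Fintype.card_pos
  have hunit : IsUnit (aeval B A.charpoly) := by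
    rw [← spectrum.zero_notMem_iff K, spectrum.map_polynomial_aeval_of_degree_pos _ _ hdeg]
    rintro ⟨x, hxB, hx⟩
    exact hAB.ne_of_mem (mem_spectrum_of_isRoot_charpoly hx) hxB rfl
  have hX : X * aeval B A.charpoly = 0 := by
    rw [← aeval_mul_eq_mul_aeval h, aeval_self_charpoly, Matrix.zero_mul]
  rw [← mul_nonsing_inv_cancel_right (A := aeval B A.charpoly) X
    ((isUnit_iff_isUnit_det _).mp hunit), hX, Matrix.zero_mul]

theorem mul_inv_eq_inv_mul_of_mul_eq_mul {R : Type*} [CommRing R] {A : Matrix n n R}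
    {B : Matrix m m R} {X : Matrix m n R} (hA : IsUnit A.det) (hB : IsUnit B.det)
    (h : X * A = B * X) : X * A⁻¹ = B⁻¹ * X :=
  calc X * A⁻¹ = B⁻¹ * (B * X) * A⁻¹ := by rw [nonsing_inv_mul_cancel_left _ _ hB]
    _ = B⁻¹ * X := by rw [← h, Matrix.mul_assoc, mul_nonsing_inv_cancel_right _ _ hA]

theorem mul_one_add_mul_eq_one_add_mul_mul {R : Type*} [Semiring R] (b : Matrix m n R)
    (bt : Matrix n m R) : b * (1 + bt * b) = (1 + b * bt) * b := by
  rw [Matrix.mul_add, Matrix.add_mul, Matrix.mul_one, Matrix.one_mul, Matrix.mul_assoc]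

theorem mul_eq_mul_of_mul_self_mul_eq {b : Matrix m n ℂ} {s₁ : Matrix n n ℂ}
    {s₂ : Matrix m m ℂ} (h : b * (s₁ * s₁) = s₂ * s₂ * b)
    (hs₁ : ∀ x ∈ spectrum ℂ s₁, 0 < x.re) (hs₂ : ∀ x ∈ spectrum ℂ s₂, 0 < x.re) :
    b * s₁ = s₂ * b := by
  have hD : s₂ * (b * s₁ - s₂ * b) = (b * s₁ - s₂ * b) * -s₁ := by
    simp only [Matrix.mul_sub, Matrix.sub_mul, Matrix.mul_neg, ← Matrix.mul_assoc]
    rw [Matrix.mul_assoc b, h]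
    abel
  have hdisj : Disjoint (spectrum ℂ s₂) (spectrum ℂ (-s₁)) := by
    rw [← spectrum.neg_eq, Set.disjoint_left]
    intro x hx₂ hx₁
    linarith [hs₂ x hx₂, hs₁ (-x) hx₁, Complex.neg_re x]
  exact sub_eq_zero.mp (eq_zero_of_mul_eq_mul_of_disjoint_spectrum hD hdisj)

theorem one_sub_mul_mul_one_add_mul_eq_one {b : Matrix m n ℂ} {bt : Matrix n m ℂ}
    {s₁ : Matrix n n ℂ} {s₂ : Matrix m m ℂ} (hs₂ : s₂ * s₂ = 1 + b * bt) (hu : IsUnit s₂.det)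
    (hb : b * s₁⁻¹ = s₂⁻¹ * b) : (1 - b * s₁⁻¹ * (bt * s₂⁻¹)) * (1 + b * bt) = 1 := by
  have hbbt : b * bt = s₂ * s₂ - 1 := eq_sub_of_add_eq' hs₂.symm
  rw [hb, ← hs₂, Matrix.mul_assoc, ← Matrix.mul_assoc b, hbbt]
  simp [Matrix.sub_mul, Matrix.mul_sub, Matrix.mul_assoc, nonsing_inv_mul_cancel_left _ _ hu,
    nonsing_inv_mul _ hu]

end Matrix

theorem QR_dyson_maleev_formula_general {p q : ℕ}
    (b : Matrix (Fin p) (Fin q) ℂ) (bt : Matrix (Fin q) (Fin p) ℂ)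
    (s₁ : Matrix (Fin q) (Fin q) ℂ) (s₂ : Matrix (Fin p) (Fin p) ℂ)
    (hs₁ : s₁ * s₁ = 1 + bt * b) (hs₁spec : ∀ x ∈ spectrum ℂ s₁, 0 < x.re)
    (hs₂ : s₂ * s₂ = 1 + b * bt) (hs₂spec : ∀ x ∈ spectrum ℂ s₂, 0 < x.re)
    (Z : Matrix (Fin p) (Fin q) ℂ) (Zt : Matrix (Fin q) (Fin p) ℂ)
    (hZ : Z = -(b * s₁⁻¹)) (hZt : Zt = -(bt * s₂⁻¹)) :
    (1 + Z * Zt) * (1 - Z * Zt)⁻¹ = 1 + (2 : ℂ) • (b * bt) ∧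
    -((2 : ℂ) • (Z * (1 - Zt * Z)⁻¹)) = (2 : ℂ) • (b * s₁) ∧
    (2 : ℂ) • (Zt * (1 - Z * Zt)⁻¹) = -((2 : ℂ) • (bt * s₂)) ∧
    -((1 + Zt * Z) * (1 - Zt * Z)⁻¹) = -1 - (2 : ℂ) • (bt * b) := by
  have hu₁ := (isUnit_iff_isUnit_det s₁).mp (isUnit_of_forall_spectrum_re_pos hs₁spec)
  have hu₂ := (isUnit_iff_isUnit_det s₂).mp (isUnit_of_forall_spectrum_re_pos hs₂spec)
  have hb : b * s₁⁻¹ = s₂⁻¹ * b := mul_inv_eq_inv_mul_of_mul_eq_mul hu₁ hu₂ <|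
    mul_eq_mul_of_mul_self_mul_eq (by rw [hs₁, hs₂, mul_one_add_mul_eq_one_add_mul_mul]) hs₁spec
      hs₂spec
  have hbt : bt * s₂⁻¹ = s₁⁻¹ * bt := mul_inv_eq_inv_mul_of_mul_eq_mul hu₂ hu₁ <|
    mul_eq_mul_of_mul_self_mul_eq (by rw [hs₁, hs₂, mul_one_add_mul_eq_one_add_mul_mul]) hs₂spec
      hs₁spec
  have h₂ : (1 - Z * Zt) * (1 + b * bt) = 1 := by
    rw [hZ, hZt, Matrix.neg_mul, Matrix.mul_neg, neg_neg]
    exact one_sub_mul_mul_one_add_mul_eq_one hs₂ hu₂ hb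
  have h₁ : (1 - Zt * Z) * (1 + bt * b) = 1 := by
    rw [hZ, hZt, Matrix.neg_mul, Matrix.mul_neg, neg_neg]
    exact one_sub_mul_mul_one_add_mul_eq_one hs₁ hu₁ hbt
  rw [inv_eq_right_inv h₁, inv_eq_right_inv h₂]
  refine ⟨?_, ?_, ?_, ?_⟩
  · rw [one_add_mul_eq_of_one_sub_mul_eq_one h₂]
    module
  · rw [hZ, ← hs₁, Matrix.neg_mul, Matrix.mul_assoc, nonsing_inv_mul_cancel_left _ _ hu₁]
    module
  · rw [hZt, ← hs₂, Matrix.neg_mul, Matrix.mul_assoc, nonsing_inv_mul_cancel_left _ _ hu₂]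
    module
  · rw [one_add_mul_eq_of_one_sub_mul_eq_one h₁]
    module

/-- Algebraic simplification `Q ∘ R` (equation (7) of the paper).
Here `b` is `p × q`, `b̃` is `q × p`, the spectra of `b̃b` and `b b̃` avoid
`(-∞, -1]`, and `s₁`, `s₂` are the principal square roots of `1 + b̃b` and
`1 + b b̃` (characterized as the square roots whose spectra lie in the open
right half-plane).  With `Z = -b s₁⁻¹` and `Z̃ = -b̃ s₂⁻¹` one has
`(1+Z Z̃)(1-Z Z̃)⁻¹ = 1 + 2 b b̃`, `-2Z(1-Z̃Z)⁻¹ = 2 b (1+b̃b)^{1/2}`,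
`2Z̃(1-Z Z̃)⁻¹ = -2 b̃ (1+b b̃)^{1/2}`, `-(1+Z̃Z)(1-Z̃Z)⁻¹ = -1 - 2 b̃b`. -/
theorem QR_dyson_maleev_formula {p q : ℕ}
    (b : Matrix (Fin p) (Fin q) ℂ) (bt : Matrix (Fin q) (Fin p) ℂ)
    (hspec₁ : ∀ x ∈ spectrum ℂ (bt * b), ¬(x.im = 0 ∧ x.re ≤ -1))
    (hspec₂ : ∀ x ∈ spectrum ℂ (b * bt), ¬(x.im = 0 ∧ x.re ≤ -1))
    (s₁ : Matrix (Fin q) (Fin q) ℂ) (s₂ : Matrix (Fin p) (Fin p) ℂ)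
    (hs₁ : s₁ * s₁ = 1 + bt * b) (hs₁spec : ∀ x ∈ spectrum ℂ s₁, 0 < x.re)
    (hs₂ : s₂ * s₂ = 1 + b * bt) (hs₂spec : ∀ x ∈ spectrum ℂ s₂, 0 < x.re)
    (Z : Matrix (Fin p) (Fin q) ℂ) (Zt : Matrix (Fin q) (Fin p) ℂ)
    (hZ : Z = -(b * s₁⁻¹)) (hZt : Zt = -(bt * s₂⁻¹)) :
    (1 + Z * Zt) * (1 - Z * Zt)⁻¹ = 1 + (2 : ℂ) • (b * bt) ∧
    -((2 : ℂ) • (Z * (1 - Zt * Z)⁻¹)) = (2 : ℂ) • (b * s₁) ∧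
    (2 : ℂ) • (Zt * (1 - Z * Zt)⁻¹) = -((2 : ℂ) • (bt * s₂)) ∧
    -((1 + Zt * Z) * (1 - Zt * Z)⁻¹) = -1 - (2 : ℂ) • (bt * b) :=
  QR_dyson_maleev_formula_general b bt s₁ s₂ hs₁ hs₁spec hs₂ hs₂spec Z Zt hZ hZt
end

section
/- For matrices Z (p×q) and Z̃ (q×p) with 1 − Z̃Z invertible, the 2-form Tr((1−Z Z̃)^{−1} dZ ∧ (1−Z̃Z)^{−1} dZ̃) is exact and equals d Tr(Z (1−Z̃Z)^{−1} dZ̃). -/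
/-!
With `R = (1 - Z̃Z)⁻¹` one has `dR = R (dZ̃ Z + Z̃ dZ) R`, so the derivative of
`Tr(Z R w̃)` in the direction `v` is `Tr(v R w̃) + Tr(Z R Z̃ v R w̃) + Tr(Z R ṽ Z R w̃)`.
The last term is symmetric in `v, w` by cyclicity of the trace and cancels in the
antisymmetrization, and the push-through identity `(1 - ZZ̃)⁻¹ = 1 + Z R Z̃` merges the
first two.
-/

open Matrix

attribute [local instance] Matrix.normedAddCommGroup Matrix.normedSpace

namespace Matrix

section PushThrough

variable {α m n : Type*} [CommRing α] [Fintype m] [Fintype n] [DecidableEq m] [DecidableEq n]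

theorem inv_one_sub_mul_eq {A : Matrix m n α} {B : Matrix n m α} (h : IsUnit (1 - B * A)) :
    (1 - A * B)⁻¹ = 1 + A * (1 - B * A)⁻¹ * B := by
  simpa [sub_eq_add_neg] using
    add_mul_mul_inv_eq_sub 1 (-A) 1 B isUnit_one isUnit_one (by simpa [sub_eq_add_neg] using h)

end PushThrough

variable {𝕜 : Type*} [NontriviallyNormedField 𝕜] [CompleteSpace 𝕜]
variable {l m n : Type*} [Fintype l] [Fintype m] [Fintype n]

noncomputable def mulCLM : Matrix l m 𝕜 →L[𝕜] Matrix m n 𝕜 →L[𝕜] Matrix l n 𝕜 :=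
  LinearMap.toContinuousLinearMap
    (LinearMap.toContinuousLinearMap.toLinearMap ∘ₗ mulLinearMap 𝕜)

-- Rather than `mulCLM.flip B`, whose codomain topology is the one of the normed structure,
-- which is not syntactically `instTopologicalSpaceMatrix`.
noncomputable def mulRightCLM (B : Matrix m n 𝕜) : Matrix l m 𝕜 →L[𝕜] Matrix l n 𝕜 :=
  LinearMap.toContinuousLinearMap ((mulLinearMap 𝕜).flip B)

variable (𝕜 n) in
noncomputable def traceCLM : Matrix n n 𝕜 →L[𝕜] 𝕜 :=
  LinearMap.toContinuousLinearMap (traceLinearMap n 𝕜 𝕜)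

theorem hasFDerivAt_inv [DecidableEq n] {A : Matrix n n 𝕜} (hA : IsUnit A) :
    HasFDerivAt (fun B : Matrix n n 𝕜 => B⁻¹) (-(mulCLM A⁻¹).comp (mulRightCLM A⁻¹)) A := by
  obtain ⟨u, rfl⟩ := hA
  -- The derivative of `Ring.inverse` needs a normed ring; the `L∞`-operator norm is one,
  -- and it induces the same topology as the entrywise norm.
  let : NormedRing (Matrix n n 𝕜) := Matrix.linftyOpNormedRing
  let : NormedAlgebra 𝕜 (Matrix n n 𝕜) := Matrix.linftyOpNormedAlgebra
  have : HasSummableGeomSeries (Matrix n n 𝕜) :=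
    @instHasSummableGeomSeriesOfCompleteSpace _ _ (FiniteDimensional.complete 𝕜 _)
  have h := hasFDerivAt_ringInverse (𝕜 := 𝕜) u
  rw [← funext nonsing_inv_eq_ringInverse] at h
  refine h.congr_fderiv (ContinuousLinearMap.ext fun B => ?_)
  show -((u⁻¹).val * B * (u⁻¹).val) = -(u.val⁻¹ * (B * u.val⁻¹))
  rw [coe_units_inv, Matrix.mul_assoc]

variable {E : Type*} [NormedAddCommGroup E] [NormedSpace 𝕜 E] {x : E}

theorem _root_.HasFDerivAt.matrix_mul {f : E → Matrix l m 𝕜} {g : E → Matrix m n 𝕜}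
    {f' : E →L[𝕜] Matrix l m 𝕜} {g' : E →L[𝕜] Matrix m n 𝕜}
    (hf : HasFDerivAt f f' x) (hg : HasFDerivAt g g' x) :
    HasFDerivAt (fun y => f y * g y) ((mulCLM (f x)).comp g' + (mulRightCLM (g x)).comp f') x :=
  (mulCLM.hasFDerivAt_of_bilinear hf hg).congr_fderiv (ContinuousLinearMap.ext fun _ => rfl)

theorem _root_.HasFDerivAt.matrix_inv [DecidableEq n] {f : E → Matrix n n 𝕜}
    {f' : E →L[𝕜] Matrix n n 𝕜} (hf : HasFDerivAt f f' x) (hx : IsUnit (f x)) :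
    HasFDerivAt (fun y => (f y)⁻¹) ((-(mulCLM (f x)⁻¹).comp (mulRightCLM (f x)⁻¹)).comp f') x :=
  (hasFDerivAt_inv hx).comp x hf

theorem _root_.HasFDerivAt.matrix_trace {f : E → Matrix n n 𝕜} {f' : E →L[𝕜] Matrix n n 𝕜}
    (hf : HasFDerivAt f f' x) :
    HasFDerivAt (fun y => (f y).trace) ((traceCLM 𝕜 n).comp f') x :=
  (traceCLM 𝕜 n).hasFDerivAt.comp x hf

theorem fderiv_trace_mul_inv_one_sub_mul_apply [DecidableEq n] {x : Matrix m n 𝕜 × Matrix n m 𝕜}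
    (hx : IsUnit (1 - x.2 * x.1)) (C : Matrix n m 𝕜) (v : Matrix m n 𝕜 × Matrix n m 𝕜) :
    fderiv 𝕜 (fun y : Matrix m n 𝕜 × Matrix n m 𝕜 => (y.1 * (1 - y.2 * y.1)⁻¹ * C).trace) x v =
      (v.1 * (1 - x.2 * x.1)⁻¹ * C).trace +
        (x.1 * (1 - x.2 * x.1)⁻¹ * (v.2 * x.1 + x.2 * v.1) * (1 - x.2 * x.1)⁻¹ * C).trace := by
  have hS : HasFDerivAt (fun y : Matrix m n 𝕜 × Matrix n m 𝕜 => 1 - y.2 * y.1) _ x :=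
    (hasFDerivAt_snd.matrix_mul hasFDerivAt_fst).const_sub 1
  have hR := hS.matrix_inv hx
  have h : HasFDerivAt
      (fun y : Matrix m n 𝕜 × Matrix n m 𝕜 => (y.1 * (1 - y.2 * y.1)⁻¹ * C).trace) _ x :=
    ((hasFDerivAt_fst.matrix_mul hR).matrix_mul (hasFDerivAt_const C x)).matrix_trace
  rw [h.fderiv]
  -- `simp` cannot evaluate this derivative: its pieces mix the entrywise-norm topology on
  -- matrices with `instTopologicalSpaceMatrix`, which agree only after unfolding.
  set R := (1 - x.2 * x.1)⁻¹
  show (x.1 * R * (0 : Matrix n m 𝕜) + (x.1 * -(R * (-(x.2 * v.1 + v.2 * x.1) * R)) + v.1 * R) *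
    C).trace = _
  simp only [Matrix.mul_zero, zero_add, Matrix.neg_mul, Matrix.mul_neg, neg_neg, Matrix.add_mul,
    Matrix.mul_add, trace_add, Matrix.mul_assoc]
  ring

end Matrix

/-- The exterior derivative of the 1-form `α_y(w) = Tr(y.1 (1 - y.2 y.1)⁻¹ w.2)` is evaluated
on `(v, w)` as `D_v (α_· w) - D_w (α_· v)`. -/
theorem invariant_two_form_exact {p q : ℕ}
    (x : Matrix (Fin p) (Fin q) ℂ × Matrix (Fin q) (Fin p) ℂ)
    (hx : IsUnit (1 - x.2 * x.1))
    (v w : Matrix (Fin p) (Fin q) ℂ × Matrix (Fin q) (Fin p) ℂ) :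
    (fderiv ℂ (fun y : Matrix (Fin p) (Fin q) ℂ × Matrix (Fin q) (Fin p) ℂ =>
          (y.1 * (1 - y.2 * y.1)⁻¹ * w.2).trace) x) v -
      (fderiv ℂ (fun y : Matrix (Fin p) (Fin q) ℂ × Matrix (Fin q) (Fin p) ℂ =>
          (y.1 * (1 - y.2 * y.1)⁻¹ * v.2).trace) x) w =
    ((1 - x.1 * x.2)⁻¹ * v.1 * (1 - x.2 * x.1)⁻¹ * w.2).trace -
      ((1 - x.1 * x.2)⁻¹ * w.1 * (1 - x.2 * x.1)⁻¹ * v.2).trace := by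
  rw [fderiv_trace_mul_inv_one_sub_mul_apply hx, fderiv_trace_mul_inv_one_sub_mul_apply hx,
    inv_one_sub_mul_eq hx]
  set R := (1 - x.2 * x.1)⁻¹
  have hcyclic := trace_mul_comm (x.1 * R * v.2) (x.1 * R * w.2)
  simp only [Matrix.mul_add, Matrix.add_mul, Matrix.one_mul, trace_add, Matrix.mul_assoc]
    at hcyclic ⊢
  linear_combination hcyclic
end

section
/- Let D, D' be real diagonal q×q matrices and u a smooth U(q)-valued function on a parameter manifold, with k = diag(u, v) block unitary. Then the 2-form (1/2)Tr(s d(kH'k^{−1}) ∧ d(kH'k^{−1})), where H' = [[0, D'],[D̃', 0]] and s = diag(1, −1) (block form), decomposes as (1/2)Tr(s dH' ∧ dH') + Tr(s k^{−1}dk ∧ d(H'²)) + (1/2)Tr(k^{−1}dk ∧ [k^{−1}dk, s H'²]). -/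
open Matrix

attribute [local instance] Matrix.normedAddCommGroup Matrix.normedSpace

section MatrixCalcHelpers

variable {E : Type*} [NormedAddCommGroup E] [NormedSpace ℝ E]
variable {m n : Type*} [Fintype m] [Fintype n] [DecidableEq n]

/-- Matrix multiplication as a continuous `ℝ`-bilinear map on square complex matrices. -/
noncomputable def mulCLM (n : Type*) [Fintype n] [DecidableEq n] :
    Matrix n n ℂ →L[ℝ] Matrix n n ℂ →L[ℝ] Matrix n n ℂ :=
  LinearMap.toContinuousLinearMap
  { toFun := fun A => LinearMap.toContinuousLinearMap
      { toFun := fun B => A * B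
        map_add' := fun B C => Matrix.mul_add A B C
        map_smul' := fun c B => (Matrix.mul_smul A c B) }
    map_add' := by intro A B; ext C i j; simp [Matrix.add_mul]
    map_smul' := by intro c A; ext B i j; simp [Matrix.smul_mul] }

@[simp] lemma mulCLM_apply (A B : Matrix n n ℂ) : mulCLM n A B = A * B := rfl

lemma hasFDerivAt_matmul {F G : E → Matrix n n ℂ} {F' G' : E →L[ℝ] Matrix n n ℂ} {x : E}
    (hF : HasFDerivAt F F' x) (hG : HasFDerivAt G G' x) :
    HasFDerivAt (fun y => F y * G y)
      ((((mulCLM n).isBoundedBilinearMap).deriv (F x, G x)).comp (F'.prod G')) x :=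
  by have := (((mulCLM n).isBoundedBilinearMap).hasFDerivAt (F x, G x)).comp x (hF.prodMk hG); exact this

lemma DifferentiableAt.matmul {F G : E → Matrix n n ℂ} {x : E}
    (hF : DifferentiableAt ℝ F x) (hG : DifferentiableAt ℝ G x) :
    DifferentiableAt ℝ (fun y => F y * G y) x :=
  (hasFDerivAt_matmul hF.hasFDerivAt hG.hasFDerivAt).differentiableAt

lemma fderiv_matmul {F G : E → Matrix n n ℂ} {x : E}
    (hF : DifferentiableAt ℝ F x) (hG : DifferentiableAt ℝ G x) (v : E) :
    fderiv ℝ (fun y => F y * G y) x v =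
      fderiv ℝ F x v * G x + F x * fderiv ℝ G x v := by
  erw [(hasFDerivAt_matmul hF.hasFDerivAt hG.hasFDerivAt).fderiv]
  rw [add_comm]; rfl

/-- Evaluation of a matrix entry as a continuous `ℝ`-linear map. -/
noncomputable def entryCLM (m n : Type*) [Fintype m] [Fintype n] (i : m) (j : n) :
    Matrix m n ℂ →L[ℝ] ℂ :=
  LinearMap.toContinuousLinearMap
  { toFun := fun A => A i j
    map_add' := fun _ _ => rfl
    map_smul' := fun _ _ => rfl }

omit [DecidableEq n] in
lemma DifferentiableAt.entry {F : E → Matrix m n ℂ} {x : E}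
    (hF : DifferentiableAt ℝ F x) (i : m) (j : n) :
    DifferentiableAt ℝ (fun y => F y i j) x :=
  (entryCLM m n i j).differentiableAt.comp x hF

omit [DecidableEq n] in
lemma differentiableAt_matrix {F : E → Matrix m n ℂ} {x : E}
    (hF : ∀ i j, DifferentiableAt ℝ (fun y => F y i j) x) :
    DifferentiableAt ℝ F x := by
  rw [show F = fun y i j => F y i j from rfl]
  exact (differentiableAt_pi (𝕜 := ℝ)).2 fun i => (differentiableAt_pi (𝕜 := ℝ)).2 (hF i)

lemma DifferentiableAt.matrix_det {F : E → Matrix n n ℂ} {x : E}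
    (hF : DifferentiableAt ℝ F x) :
    DifferentiableAt ℝ (fun y => (F y).det) x := by
  simp only [Matrix.det_apply']
  apply DifferentiableAt.fun_sum
  intro σ _
  exact ((HasFDerivAt.finset_prod (u := Finset.univ) (g := fun i y => F y (σ i) i)
    (fun i _ => (hF.entry (σ i) i).hasFDerivAt)).differentiableAt).const_mul _

lemma DifferentiableAt.matrix_adjugate {F : E → Matrix n n ℂ} {x : E}
    (hF : DifferentiableAt ℝ F x) :
    DifferentiableAt ℝ (fun y => (F y).adjugate) x := by
  apply differentiableAt_matrix
  intro i j
  simp only [Matrix.adjugate_apply]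
  apply DifferentiableAt.matrix_det
  apply differentiableAt_matrix
  intro i' j'
  rcases eq_or_ne i' j with h | h
  · simp [Matrix.updateRow_apply, h]
  · simpa [Matrix.updateRow_apply, h] using hF.entry i' j'

lemma DifferentiableAt.matrix_inv {F : E → Matrix n n ℂ} {x : E}
    (hF : DifferentiableAt ℝ F x) (hdet : (F x).det ≠ 0) :
    DifferentiableAt ℝ (fun y => (F y)⁻¹) x := by
  simp only [Matrix.inv_def, Ring.inverse_eq_inv']
  exact (hF.matrix_det.inv hdet).smul hF.matrix_adjugate

end MatrixCalcHelpers

section BlockHelpers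

variable {p q : Type*} [Fintype p] [Fintype q] [DecidableEq p] [DecidableEq q]

/-- `(A, B) ↦ fromBlocks A 0 0 B` as a continuous `ℝ`-linear map. -/
noncomputable def blkDiagCLM (p q : Type*) [Fintype p] [Fintype q] :
    (Matrix p p ℂ × Matrix q q ℂ) →L[ℝ] Matrix (p ⊕ q) (p ⊕ q) ℂ :=
  LinearMap.toContinuousLinearMap
  { toFun := fun AB => fromBlocks AB.1 0 0 AB.2
    map_add' := by intro AB CD; simp [Matrix.fromBlocks_add]
    map_smul' := by intro c AB; simp [Matrix.fromBlocks_smul] }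

/-- `(A, B) ↦ fromBlocks 0 A B 0` as a continuous `ℝ`-linear map. -/
noncomputable def blkOffCLM (p q : Type*) [Fintype p] [Fintype q] :
    (Matrix p q ℂ × Matrix q p ℂ) →L[ℝ] Matrix (p ⊕ q) (p ⊕ q) ℂ :=
  LinearMap.toContinuousLinearMap
  { toFun := fun AB => fromBlocks 0 AB.1 AB.2 0
    map_add' := by intro AB CD; simp [Matrix.fromBlocks_add]
    map_smul' := by intro c AB; simp [Matrix.fromBlocks_smul] }

lemma sdiag_comm (A : Matrix p p ℂ) (B : Matrix q q ℂ) :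
    fromBlocks A 0 0 B * fromBlocks (1 : Matrix p p ℂ) 0 0 (-1 : Matrix q q ℂ)
      = fromBlocks (1 : Matrix p p ℂ) 0 0 (-1 : Matrix q q ℂ) * fromBlocks A 0 0 B := by
  simp [Matrix.fromBlocks_multiply]

lemma soff_anticomm (A : Matrix p q ℂ) (B : Matrix q p ℂ) :
    fromBlocks 0 A B 0 * fromBlocks (1 : Matrix p p ℂ) 0 0 (-1 : Matrix q q ℂ)
      = -(fromBlocks (1 : Matrix p p ℂ) 0 0 (-1 : Matrix q q ℂ) * fromBlocks 0 A B 0) := by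
  simp [Matrix.fromBlocks_multiply, Matrix.fromBlocks_neg]

end BlockHelpers

section TraceHelpers

variable {N : Type*} [Fintype N] [DecidableEq N]

lemma trace_conj (K S B C : Matrix N N ℂ) (h1 : K * K⁻¹ = 1) (h2 : K⁻¹ * K = 1)
    (hs : S*K = K*S) :
    (S * (K*B*K⁻¹) * (K*C*K⁻¹)).trace = (S * B * C).trace := by
  have hs' : K⁻¹ * S = S * K⁻¹ := by
    calc K⁻¹ * S = K⁻¹ * S * (K * K⁻¹) := by rw [h1, mul_one]
    _ = K⁻¹ * (S * K) * K⁻¹ := by simp only [mul_assoc]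
    _ = K⁻¹ * (K * S) * K⁻¹ := by rw [hs]
    _ = S * K⁻¹ := by rw [← mul_assoc, h2, one_mul]
  calc (S * (K*B*K⁻¹) * (K*C*K⁻¹)).trace
      = ((S*K) * (B * ((K⁻¹*K) * (C * K⁻¹)))).trace := by simp only [mul_assoc]
    _ = ((S*(K*(B*C))) * K⁻¹).trace := by rw [h2, one_mul]; simp only [mul_assoc]
    _ = (K⁻¹ * (S*(K*(B*C)))).trace := Matrix.trace_mul_comm _ _
    _ = ((S*(K⁻¹*(K*(B*C))))).trace := by rw [← mul_assoc, hs', mul_assoc]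
    _ = (S * (B*C)).trace := by rw [← mul_assoc K⁻¹ K, h2, one_mul]
    _ = (S * B * C).trace := by rw [← mul_assoc]

omit [DecidableEq N] in
lemma trace_identity (S X h1 h2 a1 a2 : Matrix N N ℂ)
    (hX : X*S = -(S*X)) (hh1 : h1*S = -(S*h1)) (hh2 : h2*S = -(S*h2))
    (ha1 : a1*S = S*a1) (ha2 : a2*S = S*a2) :
    (1/2:ℂ) * ((S*(h1 + a1*X - X*a1)*(h2 + a2*X - X*a2)).trace
        - (S*(h2 + a2*X - X*a2)*(h1 + a1*X - X*a1)).trace)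
    = (1/2:ℂ)*((S*h1*h2).trace - (S*h2*h1).trace)
    + ((S*a1*(h2*X + X*h2)).trace - (S*a2*(h1*X + X*h1)).trace)
    + (1/2:ℂ)*((a1*(a2*(S*(X*X)) - (S*(X*X))*a2)).trace
        - (a2*(a1*(S*(X*X)) - (S*(X*X))*a1)).trace) := by
  have mX : ∀ Z, X*(S*Z) = -(S*(X*Z)) := fun Z => by rw [← mul_assoc, hX, neg_mul, mul_assoc]
  have mh1 : ∀ Z, h1*(S*Z) = -(S*(h1*Z)) := fun Z => by rw [← mul_assoc, hh1, neg_mul, mul_assoc]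
  have mh2 : ∀ Z, h2*(S*Z) = -(S*(h2*Z)) := fun Z => by rw [← mul_assoc, hh2, neg_mul, mul_assoc]
  have ma1 : ∀ Z, a1*(S*Z) = S*(a1*Z) := fun Z => by rw [← mul_assoc, ha1, mul_assoc]
  have ma2 : ∀ Z, a2*(S*Z) = S*(a2*Z) := fun Z => by rw [← mul_assoc, ha2, mul_assoc]
  have e1 : (S*(h1*(a2*X))).trace = -((S*(a2*(X*h1))).trace) := by
    rw [show S*(h1*(a2*X)) = (S*h1)*(a2*X) by simp only [mul_assoc], Matrix.trace_mul_comm]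
    simp only [mul_assoc, mX, mh1, mh2, ma1, ma2, mul_neg, neg_neg, Matrix.trace_neg]
  have e1s : (S*(h2*(a1*X))).trace = -((S*(a1*(X*h2))).trace) := by
    rw [show S*(h2*(a1*X)) = (S*h2)*(a1*X) by simp only [mul_assoc], Matrix.trace_mul_comm]
    simp only [mul_assoc, mX, mh1, mh2, ma1, ma2, mul_neg, neg_neg, Matrix.trace_neg]
  have e2 : (S*(h1*(X*a2))).trace = (S*(a2*(h1*X))).trace := by
    rw [show S*(h1*(X*a2)) = (S*(h1*X))*a2 by simp only [mul_assoc], Matrix.trace_mul_comm]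
    simp only [mul_assoc, mX, mh1, mh2, ma1, ma2, mul_neg, neg_neg, Matrix.trace_neg]
  have e2s : (S*(h2*(X*a1))).trace = (S*(a1*(h2*X))).trace := by
    rw [show S*(h2*(X*a1)) = (S*(h2*X))*a1 by simp only [mul_assoc], Matrix.trace_mul_comm]
    simp only [mul_assoc, mX, mh1, mh2, ma1, ma2, mul_neg, neg_neg, Matrix.trace_neg]
  have e3 : (S*(X*(a1*h2))).trace = -((S*(a1*(h2*X))).trace) := by
    rw [show S*(X*(a1*h2)) = (S*X)*(a1*h2) by simp only [mul_assoc], Matrix.trace_mul_comm]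
    simp only [mul_assoc, mX, mh1, mh2, ma1, ma2, mul_neg, neg_neg, Matrix.trace_neg]
  have e3s : (S*(X*(a2*h1))).trace = -((S*(a2*(h1*X))).trace) := by
    rw [show S*(X*(a2*h1)) = (S*X)*(a2*h1) by simp only [mul_assoc], Matrix.trace_mul_comm]
    simp only [mul_assoc, mX, mh1, mh2, ma1, ma2, mul_neg, neg_neg, Matrix.trace_neg]
  have e4 : (S*(X*(a1*(X*a2)))).trace = (S*(a2*(X*(a1*X)))).trace := by
    rw [show S*(X*(a1*(X*a2))) = (S*(X*(a1*X)))*a2 by simp only [mul_assoc],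
      Matrix.trace_mul_comm]
    simp only [mul_assoc, mX, mh1, mh2, ma1, ma2, mul_neg, neg_neg, Matrix.trace_neg]
  have e4s : (S*(X*(a2*(X*a1)))).trace = (S*(a1*(X*(a2*X)))).trace := by
    rw [show S*(X*(a2*(X*a1))) = (S*(X*(a2*X)))*a1 by simp only [mul_assoc],
      Matrix.trace_mul_comm]
    simp only [mul_assoc, mX, mh1, mh2, ma1, ma2, mul_neg, neg_neg, Matrix.trace_neg]
  have e5 : (S*(a1*(X*(X*a2)))).trace = (S*(a2*(a1*(X*X)))).trace := by
    rw [show S*(a1*(X*(X*a2))) = (S*(a1*(X*X)))*a2 by simp only [mul_assoc],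
      Matrix.trace_mul_comm]
    simp only [mul_assoc, mX, mh1, mh2, ma1, ma2, mul_neg, neg_neg, Matrix.trace_neg]
  have e5s : (S*(a2*(X*(X*a1)))).trace = (S*(a1*(a2*(X*X)))).trace := by
    rw [show S*(a2*(X*(X*a1))) = (S*(a2*(X*X)))*a1 by simp only [mul_assoc],
      Matrix.trace_mul_comm]
    simp only [mul_assoc, mX, mh1, mh2, ma1, ma2, mul_neg, neg_neg, Matrix.trace_neg]
  have e6 : (S*(X*(a1*(a2*X)))).trace = -((S*(a1*(a2*(X*X)))).trace) := by
    rw [show S*(X*(a1*(a2*X))) = (S*X)*(a1*(a2*X)) by simp only [mul_assoc],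
      Matrix.trace_mul_comm]
    simp only [mul_assoc, mX, mh1, mh2, ma1, ma2, mul_neg, neg_neg, Matrix.trace_neg]
  have e6s : (S*(X*(a2*(a1*X)))).trace = -((S*(a2*(a1*(X*X)))).trace) := by
    rw [show S*(X*(a2*(a1*X))) = (S*X)*(a2*(a1*X)) by simp only [mul_assoc],
      Matrix.trace_mul_comm]
    simp only [mul_assoc, mX, mh1, mh2, ma1, ma2, mul_neg, neg_neg, Matrix.trace_neg]
  simp only [mul_add, add_mul, mul_sub, sub_mul, mul_assoc, mul_neg, neg_mul,
    Matrix.trace_add, Matrix.trace_sub, Matrix.trace_neg, mX, mh1, mh2, ma1, ma2, neg_neg]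
  rw [e1, e1s, e2, e2s, e3, e3s, e4, e4s, e5, e5s, e6, e6s]
  ring

end TraceHelpers

/-- Equation (11) of the paper: with `k = diag(u, v)` block unitary,
`H' = [[0, D'], [D̃', 0]]` off-block-diagonal and `s = Diag(1_p, -1_q)`, all
depending smoothly on parameters, the 2-form
`(1/2) Tr(s d(kH'k⁻¹) ∧ d(kH'k⁻¹))` decomposes as
`(1/2) Tr(s dH' ∧ dH') + Tr(s k⁻¹dk ∧ d(H'²))
  + (1/2) Tr(k⁻¹dk ∧ [k⁻¹dk, s H'²])`,
stated pointwise: the two sides are equal when evaluated on any pair of tangent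
vectors `(vec₁, vec₂)` of the parameter space, directional derivatives being
`fderiv`s. -/
theorem two_form_decomposition {p q : ℕ}
    (u : ℝ × ℝ → Matrix (Fin p) (Fin p) ℂ) (vv : ℝ × ℝ → Matrix (Fin q) (Fin q) ℂ)
    (D' : ℝ × ℝ → Matrix (Fin p) (Fin q) ℂ) (Dt' : ℝ × ℝ → Matrix (Fin q) (Fin p) ℂ)
    (hu : ContDiff ℝ (⊤ : ℕ∞) u) (hvv : ContDiff ℝ (⊤ : ℕ∞) vv)
    (hD' : ContDiff ℝ (⊤ : ℕ∞) D') (hDt' : ContDiff ℝ (⊤ : ℕ∞) Dt')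
    (x : ℝ × ℝ)
    (hux : u x ∈ Matrix.unitaryGroup (Fin p) ℂ)
    (hvx : vv x ∈ Matrix.unitaryGroup (Fin q) ℂ)
    (vec₁ vec₂ : ℝ × ℝ) :
    let k : ℝ × ℝ → Matrix (Fin p ⊕ Fin q) (Fin p ⊕ Fin q) ℂ :=
      fun y => fromBlocks (u y) 0 0 (vv y)
    let H : ℝ × ℝ → Matrix (Fin p ⊕ Fin q) (Fin p ⊕ Fin q) ℂ :=
      fun y => fromBlocks 0 (D' y) (Dt' y) 0
    let s : Matrix (Fin p ⊕ Fin q) (Fin p ⊕ Fin q) ℂ :=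
      fromBlocks 1 0 0 (-1)
    let Q : ℝ × ℝ → Matrix (Fin p ⊕ Fin q) (Fin p ⊕ Fin q) ℂ :=
      fun y => k y * H y * (k y)⁻¹
    let Dv : (ℝ × ℝ → Matrix (Fin p ⊕ Fin q) (Fin p ⊕ Fin q) ℂ) →
        (ℝ × ℝ) → Matrix (Fin p ⊕ Fin q) (Fin p ⊕ Fin q) ℂ :=
      fun F ve => fderiv ℝ F x ve
    let a₁ : Matrix (Fin p ⊕ Fin q) (Fin p ⊕ Fin q) ℂ := (k x)⁻¹ * Dv k vec₁
    let a₂ : Matrix (Fin p ⊕ Fin q) (Fin p ⊕ Fin q) ℂ := (k x)⁻¹ * Dv k vec₂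
    let Hsq : Matrix (Fin p ⊕ Fin q) (Fin p ⊕ Fin q) ℂ := H x * H x
    (1 / 2 : ℂ) * ((s * Dv Q vec₁ * Dv Q vec₂).trace - (s * Dv Q vec₂ * Dv Q vec₁).trace) =
      (1 / 2 : ℂ) * ((s * Dv H vec₁ * Dv H vec₂).trace - (s * Dv H vec₂ * Dv H vec₁).trace)
      + ((s * a₁ * Dv (fun y => H y * H y) vec₂).trace -
          (s * a₂ * Dv (fun y => H y * H y) vec₁).trace)
      + (1 / 2 : ℂ) * ((a₁ * (a₂ * (s * Hsq) - (s * Hsq) * a₂)).trace -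
          (a₂ * (a₁ * (s * Hsq) - (s * Hsq) * a₁)).trace) := by
  intro k H s Q Dv a₁ a₂ Hsq
  have hk_at : k x = fromBlocks (u x) 0 0 (vv x) := rfl
  have hH_at : H x = fromBlocks 0 (D' x) (Dt' x) 0 := rfl
  have hs_eq : s = fromBlocks 1 0 0 (-1) := rfl
  -- differentiability of the building blocks
  have hud : DifferentiableAt ℝ u x := (hu.differentiable (by simp)).differentiableAt
  have hvd : DifferentiableAt ℝ vv x := (hvv.differentiable (by simp)).differentiableAt
  have hD'd : DifferentiableAt ℝ D' x := (hD'.differentiable (by simp)).differentiableAt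
  have hDt'd : DifferentiableAt ℝ Dt' x := (hDt'.differentiable (by simp)).differentiableAt
  -- derivative of k and H
  have hkfd : HasFDerivAt k ((blkDiagCLM (Fin p) (Fin q)).comp
      ((fderiv ℝ u x).prod (fderiv ℝ vv x))) x :=
    ((blkDiagCLM (Fin p) (Fin q)).hasFDerivAt).comp x (hud.hasFDerivAt.prodMk hvd.hasFDerivAt)
  have hkd : DifferentiableAt ℝ k x := hkfd.differentiableAt
  have hDk : ∀ v, fderiv ℝ k x v = fromBlocks (fderiv ℝ u x v) 0 0 (fderiv ℝ vv x v) := by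
    intro v; rw [hkfd.fderiv]; rfl
  have hHfd : HasFDerivAt H ((blkOffCLM (Fin p) (Fin q)).comp
      ((fderiv ℝ D' x).prod (fderiv ℝ Dt' x))) x :=
    ((blkOffCLM (Fin p) (Fin q)).hasFDerivAt).comp x (hD'd.hasFDerivAt.prodMk hDt'd.hasFDerivAt)
  have hHd : DifferentiableAt ℝ H x := hHfd.differentiableAt
  have hDH : ∀ v, fderiv ℝ H x v = fromBlocks 0 (fderiv ℝ D' x v) (fderiv ℝ Dt' x v) 0 := by
    intro v; rw [hHfd.fderiv]; rfl
  -- unitarity facts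
  have hu1 : u x * star (u x) = 1 := (Matrix.mem_unitaryGroup_iff).1 hux
  have hv1 : vv x * star (vv x) = 1 := (Matrix.mem_unitaryGroup_iff).1 hvx
  have hu2 : star (u x) * u x = 1 := (Matrix.mem_unitaryGroup_iff').1 hux
  have hv2 : star (vv x) * vv x = 1 := (Matrix.mem_unitaryGroup_iff').1 hvx
  have hkW : k x * fromBlocks (star (u x)) 0 0 (star (vv x)) = 1 := by
    rw [hk_at]
    simp [Matrix.fromBlocks_multiply, hu1, hv1, Matrix.fromBlocks_one]
  have hkinv_eq : (k x)⁻¹ = fromBlocks (star (u x)) 0 0 (star (vv x)) :=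
    Matrix.inv_eq_right_inv hkW
  have hKK : k x * (k x)⁻¹ = 1 := by rw [hkinv_eq]; exact hkW
  have hK'K : (k x)⁻¹ * k x = 1 := by
    rw [hkinv_eq, hk_at]
    simp [Matrix.fromBlocks_multiply, hu2, hv2, Matrix.fromBlocks_one]
  have hdetne : (k x).det ≠ 0 := by
    have h1 : (k x).det * (fromBlocks (star (u x)) 0 0 (star (vv x))).det = 1 := by
      rw [← Matrix.det_mul, hkW, Matrix.det_one]
    exact isUnit_iff_ne_zero.1 (IsUnit.of_mul_eq_one _ h1)
  -- commutation facts with s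
  have hsk : s * k x = k x * s := by rw [hs_eq, hk_at]; exact (sdiag_comm _ _).symm
  have hskinv : (k x)⁻¹ * s = s * (k x)⁻¹ := by rw [hs_eq, hkinv_eq]; exact sdiag_comm _ _
  have hsDk : ∀ v, fderiv ℝ k x v * s = s * fderiv ℝ k x v := by
    intro v; rw [hs_eq, hDk v]; exact sdiag_comm _ _
  have hXs : H x * s = -(s * H x) := by rw [hs_eq, hH_at]; exact soff_anticomm _ _
  have hhs : ∀ v, fderiv ℝ H x v * s = -(s * fderiv ℝ H x v) := by
    intro v; rw [hs_eq, hDH v]; exact soff_anticomm _ _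
  have has : ∀ v, ((k x)⁻¹ * fderiv ℝ k x v) * s = s * ((k x)⁻¹ * fderiv ℝ k x v) := by
    intro v; rw [mul_assoc, hsDk v, ← mul_assoc, hskinv, mul_assoc]
  -- derivative of the inverse
  have hkinvd : DifferentiableAt ℝ (fun y => (k y)⁻¹) x := hkd.matrix_inv hdetne
  have hev : (fun y => k y * (k y)⁻¹)
      =ᶠ[nhds x] (fun _ => (1 : Matrix (Fin p ⊕ Fin q) (Fin p ⊕ Fin q) ℂ)) := by
    have hc : ContinuousAt (fun y => (k y).det) x := hkd.matrix_det.continuousAt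
    filter_upwards [hc.eventually_ne hdetne] with y hy
    exact Matrix.mul_nonsing_inv _ (isUnit_iff_ne_zero.2 hy)
  have h0 : fderiv ℝ (fun y => k y * (k y)⁻¹) x = 0 := by
    rw [Filter.EventuallyEq.fderiv_eq hev]
    exact fderiv_const_apply 1
  have hDinv : ∀ v, fderiv ℝ (fun y => (k y)⁻¹) x v
      = -((k x)⁻¹ * (fderiv ℝ k x v * (k x)⁻¹)) := by
    intro v
    have hp : fderiv ℝ (fun y => k y * (k y)⁻¹) x v
        = fderiv ℝ k x v * (k x)⁻¹ + k x * fderiv ℝ (fun y => (k y)⁻¹) x v :=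
      fderiv_matmul hkd hkinvd v
    rw [h0] at hp
    simp only [ContinuousLinearMap.zero_apply] at hp
    have hp0 : k x * fderiv ℝ (fun y => (k y)⁻¹) x v + fderiv ℝ k x v * (k x)⁻¹ = 0 := by
      rw [add_comm]; exact hp.symm
    have h2 : k x * fderiv ℝ (fun y => (k y)⁻¹) x v = -(fderiv ℝ k x v * (k x)⁻¹) :=
      eq_neg_of_add_eq_zero_left hp0
    calc fderiv ℝ (fun y => (k y)⁻¹) x v
        = ((k x)⁻¹ * k x) * fderiv ℝ (fun y => (k y)⁻¹) x v := by rw [hK'K, one_mul]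
      _ = (k x)⁻¹ * (k x * fderiv ℝ (fun y => (k y)⁻¹) x v) := by rw [mul_assoc]
      _ = -((k x)⁻¹ * (fderiv ℝ k x v * (k x)⁻¹)) := by rw [h2, mul_neg]
  -- derivative of Q
  have hkHd : DifferentiableAt ℝ (fun y => k y * H y) x := hkd.matmul hHd
  have hDQ : ∀ v, fderiv ℝ (fun y => k y * H y * (k y)⁻¹) x v
      = k x * (fderiv ℝ H x v + ((k x)⁻¹ * fderiv ℝ k x v) * H x
          - H x * ((k x)⁻¹ * fderiv ℝ k x v)) * (k x)⁻¹ := by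
    intro v
    have h1 : fderiv ℝ (fun y => k y * H y * (k y)⁻¹) x v
        = fderiv ℝ (fun y => k y * H y) x v * (k x)⁻¹
          + (k x * H x) * fderiv ℝ (fun y => (k y)⁻¹) x v :=
      fderiv_matmul hkHd hkinvd v
    have h2 : fderiv ℝ (fun y => k y * H y) x v
        = fderiv ℝ k x v * H x + k x * fderiv ℝ H x v :=
      fderiv_matmul hkd hHd v
    rw [h1, h2, hDinv v]
    simp only [mul_add, add_mul, mul_sub, sub_mul, mul_neg, neg_mul, ← mul_assoc,
      hKK, one_mul]
    abel
  have hDH2 : ∀ v, fderiv ℝ (fun y => H y * H y) x v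
      = fderiv ℝ H x v * H x + H x * fderiv ℝ H x v :=
    fun v => fderiv_matmul hHd hHd v
  simp only [Dv, Q, a₁, a₂, Hsq]
  rw [hDQ vec₁, hDQ vec₂, trace_conj (k x) s _ _ hKK hK'K hsk,
    trace_conj (k x) s _ _ hKK hK'K hsk, hDH2 vec₁, hDH2 vec₂]
  exact trace_identity s (H x) (fderiv ℝ H x vec₁) (fderiv ℝ H x vec₂)
    ((k x)⁻¹ * fderiv ℝ k x vec₁) ((k x)⁻¹ * fderiv ℝ k x vec₂)
    hXs (hhs vec₁) (hhs vec₂) (has vec₁) (has vec₂)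
end
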